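/- arXiv:1001.1673 — 2 statements merged into one kernel-verified Lean document; each statement's English description precedes it below -/
import Mathlib

section
/- Let H = H₁⊗⋯⊗Hₘ with finite-dimensional complex Hilbert spaces H_μ, and let G be a finite abelian group with |G| ≥ (dim H)². Then a Hermitian operator A on H is separable if and only if there exist mappings Φ^μ : G → H_μ such that A = Σ_{g∈G} |(Φ¹⋆⋯⋆Φᵐ)(g)⟩⟨(Φ¹⋆⋯⋆Φᵐ)(g)|, where ⋆ denotes the tensor convolution. -/
noncomputable section

/-- The rank-one operator `|u⟩⟨u| : w ↦ ⟪u, w⟫ • u`. -/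
def rankOne {E : Type*} [NormedAddCommGroup E] [InnerProductSpace ℂ E] (u : E) : E →L[ℂ] E :=
  (innerSL ℂ u).smulRight u

variable {m : ℕ} {H : Fin (m + 1) → Type*}
  [∀ μ, NormedAddCommGroup (H μ)] [∀ μ, InnerProductSpace ℂ (H μ)]
  {E : Type*} [NormedAddCommGroup E] [InnerProductSpace ℂ E]

/-- The tensor convolution `(Φ¹ ⋆ ⋯ ⋆ Φᵐ)(g) = Σ_{g₂,…,gₘ} Φ¹(g−g₂−⋯−gₘ)⊗Φ²(g₂)⊗⋯⊗Φᵐ(gₘ)`,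
realized through a multilinear map `T` playing the role of the tensor product. -/
def tensorConv {G : Type*} [AddCommGroup G] [Fintype G]
    (T : MultilinearMap ℂ H E) (Φ : ∀ μ, G → H μ) (g : G) : E :=
  ∑ k : Fin m → G, T fun μ => Φ μ (Fin.cons (α := fun _ => G) (g - ∑ j, k j) k μ)

/-- An operator is separable (w.r.t. the tensor structure `T`) if it is a finite sum of
positive multiples of projectors onto simple tensors. -/
def IsSeparableOp (T : MultilinearMap ℂ H E) (A : E →L[ℂ] E) : Prop :=
  ∃ (P : ℕ) (c : Fin P → ℝ) (v : Fin P → ∀ μ, H μ),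
    (∀ p, 0 < c p) ∧ A = ∑ p, (c p : ℂ) • rankOne (T (v p))

/-!
Fourier transform on `G` turns the tensor convolution into a tensor product: writing
`Φ̂^μ(χ) = ∑_g χ(g) Φ^μ(g)` for characters `χ` of `G`, one has
`T(Φ̂¹(χ), …, Φ̂ᵐ(χ)) = ∑_g χ(g) (Φ¹⋆⋯⋆Φᵐ)(g)`, and orthogonality of characters then gives
`|G| ∑_g |ψ(g)⟩⟨ψ(g)| = ∑_χ |T(Φ̂(χ))⟩⟨T(Φ̂(χ))|` for `ψ = Φ¹⋆⋯⋆Φᵐ`. Since the Fourier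
transform is onto, the operators of the stated form are exactly `|G|⁻¹` times the sums of
`|Ĝ| = |G|` projectors onto simple tensors. A separable operator is such a sum: by
Carathéodory's theorem for cones it is a nonnegative combination of `ℝ`-linearly independent
self-adjoint rank-one operators, and there are at most `dim_ℝ Herm(E) = (dim E)² ≤ |G|` of those.
-/

open ComplexConjugate Finset

section Caratheodory

variable {𝕜 M ι : Type*} [Field 𝕜] [LinearOrder 𝕜] [IsStrictOrderedRing 𝕜]
  [AddCommGroup M] [Module 𝕜 M] {f : ι → M} {s : Finset ι} {c : ι → 𝕜}

lemma exists_nonneg_sum_erase_eq_of_not_linearIndepOn [DecidableEq ι]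
    (hs : ¬LinearIndepOn 𝕜 f s) (hc : ∀ i ∈ s, 0 ≤ c i) :
    ∃ i ∈ s, ∃ c' : ι → 𝕜, (∀ j ∈ s.erase i, 0 ≤ c' j) ∧
      ∑ j ∈ s.erase i, c' j • f j = ∑ j ∈ s, c j • f j := by
  obtain ⟨g, hg, hpos⟩ : ∃ g : ι → 𝕜, ∑ j ∈ s, g j • f j = 0 ∧ ∃ i ∈ s, 0 < g i := by
    obtain ⟨g, hg, i, hi, hgi⟩ := not_linearIndepOn_finset_iff.mp hs
    rcases hgi.lt_or_gt with hneg | hpos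
    · exact ⟨-g, by simp [neg_smul, hg], i, hi, neg_pos.mpr hneg⟩
    · exact ⟨g, hg, i, hi, hpos⟩
  obtain ⟨i, hi, hmin⟩ := ({j ∈ s | 0 < g j}).exists_min_image (fun j => c j / g j)
    (by simpa [Finset.Nonempty] using hpos)
  rw [mem_filter] at hi
  -- subtract the largest multiple of the relation `g` keeping all coefficients nonnegative
  refine ⟨i, hi.1, fun j => c j - c i / g i * g j, fun j hj => ?_, ?_⟩
  · have hcj := hc j (mem_of_mem_erase hj)
    rw [sub_nonneg]
    rcases lt_or_ge 0 (g j) with hgj | hgj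
    · exact (le_div_iff₀ hgj).mp (hmin j (mem_filter.mpr ⟨mem_of_mem_erase hj, hgj⟩))
    · exact (mul_nonpos_of_nonneg_of_nonpos (div_nonneg (hc i hi.1) hi.2.le) hgj).trans hcj
  · rw [sum_erase _ (by simp [hi.2.ne'])]
    simp only [sub_smul, mul_smul, sum_sub_distrib, ← smul_sum, hg, smul_zero, sub_zero]

theorem exists_linearIndepOn_nonneg_sum_eq (f : ι → M) (s : Finset ι) (c : ι → 𝕜)
    (hc : ∀ i ∈ s, 0 ≤ c i) :
    ∃ t ⊆ s, ∃ c' : ι → 𝕜, (∀ i ∈ t, 0 ≤ c' i) ∧ LinearIndepOn 𝕜 f t ∧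
      ∑ i ∈ t, c' i • f i = ∑ i ∈ s, c i • f i := by
  classical
  induction s using Finset.strongInduction generalizing c with
  | H s ih =>
    by_cases hs : LinearIndepOn 𝕜 f s
    · exact ⟨s, subset_rfl, c, hc, hs, rfl⟩
    obtain ⟨i, hi, c', hc', hsum⟩ := exists_nonneg_sum_erase_eq_of_not_linearIndepOn hs hc
    obtain ⟨t, hts, c'', hc'', ht, htsum⟩ := ih _ (erase_ssubset hi) c' hc'
    exact ⟨t, hts.trans (erase_subset _ _), c'', hc'', ht, htsum.trans hsum⟩

end Caratheodory

lemma LinearIndependent.complex_of_isSelfAdjoint {A ι : Type*} [AddCommGroup A] [Module ℂ A]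
    [StarAddMonoid A] [StarModule ℂ A] {f : ι → A} (hsa : ∀ i, IsSelfAdjoint (f i))
    (hf : LinearIndependent ℝ f) : LinearIndependent ℂ f := by
  rw [linearIndependent_iff'] at hf ⊢
  intro s z hz i hi
  have hre : ∑ j ∈ s, (z j).re • f j = 0 := by
    simpa [realPart_smul, (hsa _).coe_realPart, (hsa _).imaginaryPart] using
      congrArg (fun a => (realPart a : A)) hz
  have him : ∑ j ∈ s, (z j).im • f j = 0 := by
    simpa [imaginaryPart_smul, (hsa _).coe_realPart, (hsa _).imaginaryPart] using
      congrArg (fun a => (imaginaryPart a : A)) hz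
  exact Complex.ext (hf s _ hre i hi) (hf s _ him i hi)

lemma card_le_finrank_sq_of_isSelfAdjoint [FiniteDimensional ℂ E] {ι : Type*} [Fintype ι]
    {f : ι → E →L[ℂ] E} (hsa : ∀ i, IsSelfAdjoint (f i)) (hf : LinearIndependent ℝ f) :
    Fintype.card ι ≤ Module.finrank ℂ E ^ 2 := by
  have hrank : Module.finrank ℂ (E →L[ℂ] E) = Module.finrank ℂ E ^ 2 := by
    rw [← LinearMap.toContinuousLinearMap.finrank_eq, Module.finrank_linearMap, sq]
  exact hrank ▸ (hf.complex_of_isSelfAdjoint hsa).fintype_card_le_finrank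

lemma rankOne_eq_rankOne_self (u : E) : rankOne u = InnerProductSpace.rankOne ℂ u u := rfl

@[simp]
lemma rankOne_zero : rankOne (0 : E) = 0 := by
  simp [rankOne_eq_rankOne_self]

lemma isSelfAdjoint_rankOne [CompleteSpace E] (u : E) : IsSelfAdjoint (rankOne u) := by
  rw [rankOne_eq_rankOne_self, ContinuousLinearMap.isSelfAdjoint_iff']
  exact InnerProductSpace.adjoint_rankOne u u

lemma rankOne_ofReal_sqrt_smul {r : ℝ} (hr : 0 ≤ r) (u : E) :
    rankOne ((Real.sqrt r : ℂ) • u) = (r : ℂ) • rankOne u := by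
  simp only [rankOne_eq_rankOne_self, map_smul, map_smulₛₗ, smul_apply,
    Complex.conj_ofReal, smul_smul]
  rw [← Complex.ofReal_mul, Real.mul_self_sqrt hr]

namespace AddChar

lemma map_sum_eq_prod {A M ι : Type*} [AddCommMonoid A] [CommMonoid M] (χ : AddChar A M)
    (s : Finset ι) (g : ι → A) : χ (∑ i ∈ s, g i) = ∏ i ∈ s, χ (g i) := by
  induction s using Finset.cons_induction with
  | empty => simp
  | cons a s ha ih => rw [sum_cons, prod_cons, map_add_eq_mul, ih]

variable {G : Type*} [AddCommGroup G] [Fintype G]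

lemma sum_apply_mul_conj_apply [DecidableEq G] (a b : G) :
    ∑ χ : AddChar G ℂ, χ a * conj (χ b) = if a = b then (Fintype.card G : ℂ) else 0 := by
  simp_rw [← map_neg_eq_conj, ← map_add_eq_mul, ← sub_eq_add_neg, sum_apply_eq_ite, sub_eq_zero]

lemma sum_mul_conj (χ ψ : AddChar G ℂ) :
    ∑ g, χ g * conj (ψ g) = if χ = ψ then (Fintype.card G : ℂ) else 0 := by
  classical
  simp_rw [← map_neg_eq_conj, ← inv_apply, ← mul_apply, sum_eq_ite, ← one_eq_zero, mul_inv_eq_one]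

end AddChar

section Fourier

variable {G : Type*} [AddCommGroup G] [Fintype G]

lemma exists_sum_addChar_smul_eq {V : Type*} [AddCommGroup V] [Module ℂ V]
    (w : AddChar G ℂ → V) : ∃ φ : G → V, ∀ χ : AddChar G ℂ, ∑ g, χ g • φ g = w χ := by
  classical
  refine ⟨fun g => (Fintype.card G : ℂ)⁻¹ • ∑ ψ : AddChar G ℂ, conj (ψ g) • w ψ, fun χ => ?_⟩
  have hG : (Fintype.card G : ℂ) ≠ 0 := Nat.cast_ne_zero.mpr Fintype.card_ne_zero
  calc ∑ g, χ g • (Fintype.card G : ℂ)⁻¹ • ∑ ψ : AddChar G ℂ, conj (ψ g) • w ψ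
      = (Fintype.card G : ℂ)⁻¹ • ∑ ψ : AddChar G ℂ, (∑ g, χ g * conj (ψ g)) • w ψ := by
        simp only [smul_sum, sum_smul, smul_smul]
        rw [sum_comm]
        refine sum_congr rfl fun ψ _ => sum_congr rfl fun g _ => ?_
        ring_nf
    _ = w χ := by
        simp [AddChar.sum_mul_conj, ite_smul, smul_smul, hG]

lemma sum_addChar_rankOne_sum_smul (ψ : G → E) :
    ∑ χ : AddChar G ℂ, rankOne (∑ g, χ g • ψ g) = (Fintype.card G : ℂ) • ∑ g, rankOne (ψ g) := by
  classical
  calc ∑ χ : AddChar G ℂ, rankOne (∑ g, χ g • ψ g)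
      = ∑ h, ∑ g, (∑ χ : AddChar G ℂ, χ g * conj (χ h)) •
          InnerProductSpace.rankOne ℂ (ψ g) (ψ h) := by
        simp only [rankOne_eq_rankOne_self, map_sum, map_smul, map_smulₛₗ,
          _root_.sum_apply, smul_apply, smul_sum, sum_smul, smul_smul]
        rw [sum_comm]
        refine sum_congr rfl fun h _ => ?_
        rw [sum_comm]
        simp only [mul_comm]
    _ = (Fintype.card G : ℂ) • ∑ g, rankOne (ψ g) := by
        simp [AddChar.sum_apply_mul_conj_apply, ite_smul, smul_sum, rankOne_eq_rankOne_self]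

lemma map_sum_addChar_smul_eq_sum_smul_tensorConv (T : MultilinearMap ℂ H E)
    (Φ : ∀ μ, G → H μ) (χ : AddChar G ℂ) :
    (T fun μ => ∑ g, χ g • Φ μ g) = ∑ g, χ g • tensorConv T Φ g := by
  calc (T fun μ => ∑ g, χ g • Φ μ g)
      = ∑ h : Fin (m + 1) → G, χ (∑ μ, h μ) • T (fun μ => Φ μ (h μ)) := by
        simp only [T.map_sum, T.map_smul_univ, AddChar.map_sum_eq_prod]
    _ = ∑ k : Fin m → G, ∑ a, χ (a + ∑ j, k j) •
          T (fun μ => Φ μ (Fin.cons (α := fun _ => G) a k μ)) := by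
        rw [← (Fin.consEquiv fun _ => G).sum_comp, Fintype.sum_prod_type, sum_comm]
        simp [Fin.consEquiv, Fin.sum_cons]
    _ = ∑ k : Fin m → G, ∑ g, χ g •
          T (fun μ => Φ μ (Fin.cons (α := fun _ => G) (g - ∑ j, k j) k μ)) := by
        refine sum_congr rfl fun k _ => ?_
        rw [← (Equiv.subRight (∑ j, k j)).sum_comp]
        simp
    _ = ∑ g, χ g • tensorConv T Φ g := by
        rw [sum_comm]
        simp only [tensorConv, smul_sum]

lemma card_smul_sum_rankOne_tensorConv (T : MultilinearMap ℂ H E) (Φ : ∀ μ, G → H μ) :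
    (Fintype.card G : ℂ) • ∑ g, rankOne (tensorConv T Φ g) =
      ∑ χ : AddChar G ℂ, rankOne (T fun μ => ∑ g, χ g • Φ μ g) := by
  simp only [map_sum_addChar_smul_eq_sum_smul_tensorConv, sum_addChar_rankOne_sum_smul]

end Fourier

namespace IsSeparableOp

variable {T : MultilinearMap ℂ H E} {A : E →L[ℂ] E}

lemma ofReal_smul (hA : IsSeparableOp T A) {r : ℝ} (hr : 0 < r) :
    IsSeparableOp T ((r : ℂ) • A) := by
  obtain ⟨P, c, v, hc, rfl⟩ := hA
  exact ⟨P, r • c, v, fun p => mul_pos hr (hc p), by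
    simp only [Pi.smul_apply, smul_eq_mul, Complex.ofReal_mul, smul_sum, smul_smul]⟩

lemma sum_rankOne {ι : Type*} [Fintype ι] (w : ι → ∀ μ, H μ) :
    IsSeparableOp T (∑ i, rankOne (T (w i))) :=
  ⟨Fintype.card ι, 1, w ∘ (Fintype.equivFin ι).symm, fun _ => one_pos,
    by simpa using ((Fintype.equivFin ι).symm.sum_comp fun i => rankOne (T (w i))).symm⟩

lemma exists_eq_sum_rankOne [FiniteDimensional ℂ E] (hA : IsSeparableOp T A) {ι : Type*}
    [Fintype ι] (hι : Module.finrank ℂ E ^ 2 ≤ Fintype.card ι) :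
    ∃ w : ι → ∀ μ, H μ, A = ∑ i, rankOne (T (w i)) := by
  classical
  obtain ⟨P, c, v, hc, rfl⟩ := hA
  obtain ⟨t, -, c', hc', ht, hsum⟩ :=
    exists_linearIndepOn_nonneg_sum_eq (fun p => rankOne (T (v p))) univ c fun p _ => (hc p).le
  have hcard : Fintype.card t ≤ Fintype.card ι :=
    (card_le_finrank_sq_of_isSelfAdjoint (fun _ => isSelfAdjoint_rankOne _) ht).trans hι
  obtain ⟨e⟩ := Function.Embedding.nonempty_of_card_le hcard
  -- absorb the coefficient `c' p` into the first tensor factor of `v p`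
  let u : t → ∀ μ, H μ := fun p => Function.update (v p) 0 ((Real.sqrt (c' p) : ℂ) • v p 0)
  have hu : ∀ p : t, rankOne (T (u p)) = (c' p : ℂ) • rankOne (T (v p)) := fun p => by
    rw [T.map_update_smul, Function.update_eq_self, rankOne_ofReal_sqrt_smul (hc' p p.2)]
  refine ⟨Function.extend e u 0, ?_⟩
  rw [← Fintype.sum_of_injective e e.injective (fun p => rankOne (T (u p)))
    _ (fun i hi => by simp [Function.extend_apply' _ _ _ fun h => hi h]) fun p => by
      simp [e.injective.extend_apply]]
  simp only [hu, Complex.coe_smul]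
  rw [← hsum, ← sum_coe_sort t]

end IsSeparableOp

theorem isSeparableOp_iff_exists_tensorConv_general
    [FiniteDimensional ℂ E]
    {G : Type*} [AddCommGroup G] [Fintype G]
    (T : MultilinearMap ℂ H E)
    (hG : (Module.finrank ℂ E) ^ 2 ≤ Fintype.card G)
    (A : E →L[ℂ] E) :
    IsSeparableOp T A ↔
      ∃ Φ : ∀ μ, G → H μ, A = ∑ g : G, rankOne (tensorConv T Φ g) := by
  have hcard : (0 : ℝ) < Fintype.card G := Nat.cast_pos.mpr Fintype.card_pos
  have hcardC : (Fintype.card G : ℂ) ≠ 0 := Nat.cast_ne_zero.mpr Fintype.card_ne_zero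
  constructor
  · intro hsep
    obtain ⟨w, hw⟩ := (hsep.ofReal_smul hcard).exists_eq_sum_rankOne
      (hG.trans_eq (AddChar.card_eq (α := G)).symm)
    obtain ⟨φ, hφ⟩ := exists_sum_addChar_smul_eq w
    have hΦ : ∀ χ : AddChar G ℂ, (fun μ => ∑ g, χ g • φ g μ) = w χ := fun χ => by
      ext μ
      simp [← hφ, Finset.sum_apply]
    refine ⟨fun μ g => φ g μ, smul_right_injective _ hcardC ?_⟩
    simp only [Complex.ofReal_natCast] at hw
    simp only [hw, card_smul_sum_rankOne_tensorConv, hΦ]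
  · rintro ⟨Φ, rfl⟩
    have hsep := (IsSeparableOp.sum_rankOne (T := T)
      fun (χ : AddChar G ℂ) μ => ∑ g, χ g • Φ μ g).ofReal_smul (inv_pos.mpr hcard)
    rwa [← card_smul_sum_rankOne_tensorConv, Complex.ofReal_inv, Complex.ofReal_natCast,
      inv_smul_smul₀ hcardC] at hsep

/-- For a finite abelian group `G` with `|G| ≥ (dim H)²`, a Hermitian
operator `A` on `H = H₁⊗⋯⊗Hₘ` is separable iff it is of the form
`Σ_g |(Φ¹⋆⋯⋆Φᵐ)(g)⟩⟨(Φ¹⋆⋯⋆Φᵐ)(g)|` for some mappings `Φ^μ : G → H_μ`. -/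
theorem isSeparableOp_iff_exists_tensorConv
    [∀ μ, FiniteDimensional ℂ (H μ)] [FiniteDimensional ℂ E]
    {G : Type*} [AddCommGroup G] [Fintype G]
    (T : MultilinearMap ℂ H E)
    (hT : ∀ v w : ∀ μ, H μ, (inner ℂ (T v) (T w) : ℂ) = ∏ μ, (inner ℂ (v μ) (w μ) : ℂ))
    (hspan : Submodule.span ℂ (Set.range fun v => T v) = ⊤)
    (hG : (Module.finrank ℂ E) ^ 2 ≤ Fintype.card G)
    (A : E →L[ℂ] E) (hA : ContinuousLinearMap.adjoint A = A) :
    IsSeparableOp T A ↔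
      ∃ Φ : ∀ μ, G → H μ, A = ∑ g : G, rankOne (tensorConv T Φ g) :=
  isSeparableOp_iff_exists_tensorConv_general T hG A
end
end

section
/- Let G be a finite abelian group with at least P elements. Then every P-separable operator A on H = H₁⊗⋯⊗Hₘ can be represented as A = Σ_{g∈G} |(Φ¹⋆⋯⋆Φᵐ)(g)⟩⟨(Φ¹⋆⋯⋆Φᵐ)(g)| for suitable mappings Φ^μ : G → H_μ. -/
/-!
Choose `P` distinct characters `χ_p` of `G` (there are `|G|` of them) and put
`Φ^μ(g) = Σ_p χ_p(g) v_p^μ`, with `Φ¹` rescaled. Characters diagonalise convolution: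
`χ ⋆ χ = |G| χ` and `χ ⋆ χ' = 0` for `χ ≠ χ'`, so after rescaling
`(Φ¹ ⋆ ⋯ ⋆ Φᵐ)(g) = |G|^{-1/2} Σ_p χ_p(g) v_p`. By the orthogonality relations the cross terms
`p ≠ q` of `Σ_g |(Φ¹ ⋆ ⋯ ⋆ Φᵐ)(g)⟩⟨(Φ¹ ⋆ ⋯ ⋆ Φᵐ)(g)|` cancel and the diagonal ones give
`Σ_p |v_p⟩⟨v_p|`.
-/

noncomputable section

variable {m : ℕ} {H : Fin (m + 1) → Type*}
  [∀ μ, NormedAddCommGroup (H μ)] [∀ μ, InnerProductSpace ℂ (H μ)]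
  {E : Type*} [NormedAddCommGroup E] [InnerProductSpace ℂ E]

open ComplexConjugate

theorem AddChar.map_sum_eq_prod_s10 {A M ι : Type*} [AddCommMonoid A] [CommMonoid M]
    (ψ : AddChar A M) (s : Finset ι) (f : ι → A) :
    ψ (∑ i ∈ s, f i) = ∏ i ∈ s, ψ (f i) :=
  map_prod ψ.toMonoidHom (Multiplicative.ofAdd ∘ f) s

theorem AddChar.sum_conj_mul_eq_ite {G : Type*} [AddCommGroup G] [Fintype G]
    (ψ₁ ψ₂ : AddChar G ℂ) :
    ∑ g, conj (ψ₁ g) * ψ₂ g = if ψ₁ = ψ₂ then (Fintype.card G : ℂ) else 0 := by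
  have := AddChar.wInner_cWeight_eq_boole ψ₁ ψ₂
  rw [RCLike.wInner_cWeight_eq_expect, Fintype.expect_eq_sum_div_card] at this
  simp only [RCLike.inner_apply] at this
  rw [div_eq_iff (by simp)] at this
  simpa [mul_comm] using this

theorem AddChar.sum_normalized_conj_mul_eq_ite {G : Type*} [AddCommGroup G] [Fintype G]
    (ψ₁ ψ₂ : AddChar G ℂ) :
    ∑ g, conj ((Real.sqrt (Fintype.card G) : ℂ)⁻¹ * ψ₁ g) *
        ((Real.sqrt (Fintype.card G) : ℂ)⁻¹ * ψ₂ g) = if ψ₁ = ψ₂ then 1 else 0 := by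
  have hn : (0 : ℝ) < Fintype.card G := by exact_mod_cast Fintype.card_pos
  have hs : conj (Real.sqrt (Fintype.card G) : ℂ)⁻¹ * (Real.sqrt (Fintype.card G) : ℂ)⁻¹ *
      Fintype.card G = 1 := by
    rw [map_inv₀, Complex.conj_ofReal, ← mul_inv, ← Complex.ofReal_mul,
      Real.mul_self_sqrt hn.le, Complex.ofReal_natCast, inv_mul_cancel₀ (by exact_mod_cast hn.ne')]
  simp only [map_mul, mul_mul_mul_comm (conj _), ← Finset.mul_sum, AddChar.sum_conj_mul_eq_ite,
    mul_ite, mul_zero, hs]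

theorem Fin.sum_ite_forall_eq_apply_zero {ι M : Type*} [Fintype ι] [DecidableEq ι]
    [AddCommMonoid M] {n : ℕ} (F : (Fin (n + 1) → ι) → M) :
    ∑ r : Fin (n + 1) → ι, (if ∀ μ, r μ = r 0 then F r else 0) = ∑ p, F (fun _ => p) := by
  rw [Finset.sum_ite, Finset.sum_const_zero, add_zero]
  refine Finset.sum_nbij' (fun r => r 0) (fun p _ => p) (by simp) (by simp) ?_ (by simp) ?_
  · intro r hr
    exact funext fun μ => ((Finset.mem_filter.1 hr).2 μ).symm
  · intro r hr
    congr 1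
    exact funext fun μ => (Finset.mem_filter.1 hr).2 μ

theorem rankOne_sum_smul {ι : Type*} [Fintype ι] (c : ι → ℂ) (w : ι → E) :
    rankOne (∑ p, c p • w p) =
      ∑ p, ∑ q, (conj (c p) * c q) • (innerSL ℂ (w p)).smulRight (w q) := by
  ext x
  simp only [rankOne, ContinuousLinearMap.smulRight_apply, innerSL_apply_apply, sum_inner,
    inner_smul_left, FunLike.coe_sum, Finset.sum_apply, FunLike.coe_smul,
    Pi.smul_apply, Finset.smul_sum, smul_smul, Finset.sum_mul, Finset.sum_smul]
  rw [Finset.sum_comm]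
  refine Finset.sum_congr rfl fun p _ => Finset.sum_congr rfl fun q _ => ?_
  ring_nf

theorem sum_rankOne_sum_smul {ι κ : Type*} [Fintype ι] [DecidableEq ι] [Fintype κ]
    (a : ι → κ → ℂ) (w : ι → E)
    (ha : ∀ p q, ∑ g, conj (a p g) * a q g = if p = q then 1 else 0) :
    ∑ g, rankOne (∑ p, a p g • w p) = ∑ p, rankOne (w p) := by
  simp only [rankOne_sum_smul]
  rw [Finset.sum_comm]
  simp only [Finset.sum_comm (γ := κ), ← Finset.sum_smul, ha, ite_smul, one_smul, zero_smul,
    Finset.sum_ite_eq, Finset.mem_univ, if_true]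
  rfl

section TensorConv

variable {G : Type*} [AddCommGroup G] [Fintype G]

theorem tensorConv_sum {ι : Type*} [Fintype ι] [DecidableEq ι] (T : MultilinearMap ℂ H E)
    (Φ : ι → ∀ μ, G → H μ) (g : G) :
    tensorConv T (fun μ x => ∑ p, Φ p μ x) g = ∑ r : Fin (m + 1) → ι,
      tensorConv T (fun μ => Φ (r μ) μ) g := by
  simp only [tensorConv, T.map_sum]
  exact Finset.sum_comm

-- With `mkPiAlgebra` as the tensor structure, `tensorConv` is the convolution of scalar functions.
theorem tensorConv_smul (T : MultilinearMap ℂ H E) (f : Fin (m + 1) → G → ℂ) (u : ∀ μ, H μ)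
    (g : G) :
    tensorConv T (fun μ x => f μ x • u μ) g =
      tensorConv (MultilinearMap.mkPiAlgebra ℂ (Fin (m + 1)) ℂ) f g • T u := by
  simp only [tensorConv, T.map_smul_univ, Finset.sum_smul, MultilinearMap.mkPiAlgebra_apply]

theorem tensorConv_addChar (ψ : Fin (m + 1) → AddChar G ℂ) (g : G) :
    tensorConv (MultilinearMap.mkPiAlgebra ℂ (Fin (m + 1)) ℂ) (fun μ => ψ μ) g =
      if ∀ μ, ψ μ = ψ 0 then (Fintype.card G : ℂ) ^ m * ψ 0 g else 0 := by
  have hsummand : ∀ k : Fin m → G,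
      ∏ μ, ψ μ (Fin.cons (α := fun _ => G) (g - ∑ j, k j) k μ) =
        ψ 0 g * ∏ j, ((ψ 0)⁻¹ * ψ j.succ) (k j) := by
    intro k
    simp only [Fin.prod_univ_succ, Fin.cons_zero, Fin.cons_succ, AddChar.map_sub_eq_div,
      AddChar.map_sum_eq_prod_s10, AddChar.mul_apply, AddChar.inv_apply', Finset.prod_mul_distrib,
      Finset.prod_inv_distrib, div_eq_mul_inv]
    ring
  have hfactor : ∀ j : Fin m, ∑ x, ((ψ 0)⁻¹ * ψ j.succ) x =
      if ψ j.succ = ψ 0 then (Fintype.card G : ℂ) else 0 := by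
    intro j
    simp only [AddChar.sum_eq_ite, ← AddChar.one_eq_zero, inv_mul_eq_one, eq_comm (a := ψ 0)]
  simp only [tensorConv, MultilinearMap.mkPiAlgebra_apply, hsummand, ← Finset.mul_sum,
    ← Fintype.prod_sum, hfactor, Fintype.prod_ite_zero]
  simp only [Fin.forall_fin_succ (P := fun μ => ψ μ = ψ 0), true_and, Finset.prod_const,
    Finset.card_univ, Fintype.card_fin, mul_ite, zero_mul, mul_comm]

theorem tensorConv_sum_addChar_smul {ι : Type*} [Fintype ι] [DecidableEq ι]
    (T : MultilinearMap ℂ H E) {χ : ι → AddChar G ℂ} (hχ : Function.Injective χ)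
    (u : ι → ∀ μ, H μ) (g : G) :
    tensorConv T (fun μ x => ∑ p, χ p x • u p μ) g =
      ∑ p, ((Fintype.card G : ℂ) ^ m * χ p g) • T (u p) := by
  simp only [tensorConv_sum T (fun p μ x => χ p x • u p μ), tensorConv_smul, tensorConv_addChar,
    hχ.eq_iff, ite_smul, zero_smul]
  exact Fin.sum_ite_forall_eq_apply_zero _

end TensorConv

theorem p_separable_exists_tensorConv_general
    {G : Type*} [AddCommGroup G] [Fintype G]
    (T : MultilinearMap ℂ H E)
    {P : ℕ} (hP : P ≤ Fintype.card G)
    (v : Fin P → ∀ μ, H μ) (A : E →L[ℂ] E) (hA : A = ∑ p, rankOne (T (v p))) :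
    ∃ Φ : ∀ μ, G → H μ, A = ∑ g : G, rankOne (tensorConv T Φ g) := by
  obtain ⟨χ⟩ : Nonempty (Fin P ↪ AddChar G ℂ) :=
    Function.Embedding.nonempty_of_card_le (by simpa using hP)
  set s : ℂ := (Real.sqrt (Fintype.card G) : ℂ)⁻¹
  have horth : ∀ p q, ∑ g, conj (s * χ p g) * (s * χ q g) = if p = q then 1 else 0 :=
    fun p q => by simpa only [χ.injective.eq_iff] using
      AddChar.sum_normalized_conj_mul_eq_ite (χ p) (χ q)
  -- the factor `|G|⁻ᵐ` cancels the `|G|ᵐ` that convolving `m + 1` equal characters produces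
  let u : Fin P → ∀ μ, H μ := fun p =>
    Function.update (v p) 0 ((s / (Fintype.card G : ℂ) ^ m) • v p 0)
  have hconv : ∀ g, tensorConv T (fun μ x => ∑ p, χ p x • u p μ) g =
      ∑ p, (s * χ p g) • T (v p) := by
    intro g
    rw [tensorConv_sum_addChar_smul T χ.injective]
    refine Finset.sum_congr rfl fun p _ => ?_
    rw [T.map_update_smul, Function.update_eq_self, smul_smul]
    congr 1
    field_simp
  refine ⟨fun μ x => ∑ p, χ p x • u p μ, ?_⟩
  simp only [hA, hconv, sum_rankOne_sum_smul _ _ horth]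

/-- If `|G| ≥ P`, every `P`-separable operator is representable as
`Σ_g |(Φ¹⋆⋯⋆Φᵐ)(g)⟩⟨(Φ¹⋆⋯⋆Φᵐ)(g)|`. -/
theorem p_separable_exists_tensorConv
    [∀ μ, FiniteDimensional ℂ (H μ)] [FiniteDimensional ℂ E]
    {G : Type*} [AddCommGroup G] [Fintype G]
    (T : MultilinearMap ℂ H E)
    (hT : ∀ v w : ∀ μ, H μ, (inner ℂ (T v) (T w) : ℂ) = ∏ μ, (inner ℂ (v μ) (w μ) : ℂ))
    {P : ℕ} (hP : P ≤ Fintype.card G)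
    (v : Fin P → ∀ μ, H μ) (A : E →L[ℂ] E) (hA : A = ∑ p, rankOne (T (v p))) :
    ∃ Φ : ∀ μ, G → H μ, A = ∑ g : G, rankOne (tensorConv T Φ g) :=
  p_separable_exists_tensorConv_general T hP v A hA
end
end
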